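/- arXiv:2505.17383 — 7 statements merged into one kernel-verified Lean document; each statement's English description precedes it below -/
import Mathlib

section
/- Let R be an associative unital ring containing elements a13, a14, a23, a24 such that a13 is invertible and the relations a13·a14 = a14·a13, a23·a24 = a24·a23, and a13·a24 − a24·a13 + a23·a14 − a14·a23 = 0 hold. Define a'24 = a24 − a13⁻¹·a14·a23 and a'21 = −a13⁻¹·a23. Then a'24·a'21 = a'21·a'24. -/
/-!
Multiplying on the left by the unit `a13` clears the inverse: by the third relation
`a13 * a'24 = a24 * a13 - a23 * a14`, and `a13 * a'21 = -a23`. Both products then reduce to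
`-(a23 * a24) + a23 * a14 * a13⁻¹ * a23`, using `a23 * a24 = a24 * a23` and that `a13⁻¹`
commutes with `a14` because `a13` does.
-/

/-- Chart change λ₁ → λ₂ of NCG(2,4): first commutativity relation of I'. -/
theorem ncg24_chart2_rel1 {R : Type*} [Ring R] (a13 a14 a23 a24 b : R)
    (hb1 : a13 * b = 1) (hb2 : b * a13 = 1)
    (h1 : a13 * a14 = a14 * a13) (h2 : a23 * a24 = a24 * a23)
    (h3 : a13 * a24 - a24 * a13 + a23 * a14 - a14 * a23 = 0) :
    (a24 - b * a14 * a23) * (-(b * a23)) = (-(b * a23)) * (a24 - b * a14 * a23) := by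
  let u : Rˣ := ⟨a13, b, hb1, hb2⟩
  have hb14 : b * a14 = a14 * b := (Commute.units_inv_left (u := u) h1).eq
  have hx : a13 * (a24 - b * a14 * a23) = a24 * a13 - a23 * a14 := by
    rw [mul_sub, ← mul_assoc, ← mul_assoc, hb1, one_mul]
    linear_combination (norm := noncomm_ring) h3
  have hy : a13 * -(b * a23) = -a23 := by rw [mul_neg, ← mul_assoc, hb1, one_mul]
  refine (Units.mul_right_inj u).mp ?_
  calc a13 * ((a24 - b * a14 * a23) * -(b * a23))
      = (a24 * a13 - a23 * a14) * -(b * a23) := by rw [← mul_assoc, hx]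
    _ = -a23 * (a24 - b * a14 * a23) := by
        linear_combination (norm := noncomm_ring) -(a24 * hb1 * a23) + h2 - a23 * hb14 * a23
    _ = a13 * (-(b * a23) * (a24 - b * a14 * a23)) := by rw [← mul_assoc, hy]
end

section
/- Let R be an associative unital ring containing elements a13, a14, a23, a24 such that a13 is invertible and the relations a13·a14 = a14·a13, a23·a24 = a24·a23, and a13·a24 − a24·a13 + a23·a14 − a14·a23 = 0 hold. Define a'24 = a24 − a13⁻¹·a14·a23, a'21 = −a13⁻¹·a23, a'34 = a13⁻¹·a14, a'31 = a13⁻¹. Then a'24·a'31 − a'31·a'24 + a'34·a'21 − a'21·a'34 = 0. -/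
/-!
Writing `b = a13⁻¹`, the commutator with `b` is `x * b - b * x = b * (a13 * x - x * a13) * b`,
and `b` commutes with `a14` because `a13` does. With these two facts the left-hand side
collapses to `b * (a13 * a24 - a24 * a13 + a23 * a14 - a14 * a23) * b`, which vanishes.
-/

theorem Units.mul_inv_sub_inv_mul {R : Type*} [Ring R] (u : Rˣ) (x : R) :
    x * ↑u⁻¹ - ↑u⁻¹ * x = ↑u⁻¹ * (↑u * x - x * ↑u) * ↑u⁻¹ := by
  simp only [mul_sub, sub_mul, mul_assoc, Units.mul_inv, mul_one, Units.inv_mul_cancel_left]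

theorem ncg24_chart2_rel3_general {R : Type*} [Ring R] (a13 a14 a23 a24 b : R)
    (hb1 : a13 * b = 1) (hb2 : b * a13 = 1)
    (h1 : a13 * a14 = a14 * a13)
    (h3 : a13 * a24 - a24 * a13 + a23 * a14 - a14 * a23 = 0) :
    (a24 - b * a14 * a23) * b - b * (a24 - b * a14 * a23)
      + (b * a14) * (-(b * a23)) - (-(b * a23)) * (b * a14) = 0 := by
  let u : Rˣ := ⟨a13, b, hb1, hb2⟩
  have hb : b * a14 = a14 * b := Commute.units_inv_left (u := u) h1
  have hcomm : a24 * b - b * a24 = b * (a13 * a24 - a24 * a13) * b := u.mul_inv_sub_inv_mul a24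
  linear_combination (norm := noncomm_ring) hcomm + b * h3 * b + b * hb * a23 + b * a23 * hb

/-- Chart change λ₁ → λ₂ of NCG(2,4): the mixed "quartet" relation of I'. -/
theorem ncg24_chart2_rel3 {R : Type*} [Ring R] (a13 a14 a23 a24 b : R)
    (hb1 : a13 * b = 1) (hb2 : b * a13 = 1)
    (h1 : a13 * a14 = a14 * a13) (h2 : a23 * a24 = a24 * a23)
    (h3 : a13 * a24 - a24 * a13 + a23 * a14 - a14 * a23 = 0) :
    (a24 - b * a14 * a23) * b - b * (a24 - b * a14 * a23)
      + (b * a14) * (-(b * a23)) - (-(b * a23)) * (b * a14) = 0 :=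
  ncg24_chart2_rel3_general a13 a14 a23 a24 b hb1 hb2 h1 h3
end

section
/- Let R be an associative unital ring containing elements a24, a21, a34, a31 with both a31 and a'24 := a24 invertible (write elements of the chart λ₂ as a'24 = a24, a'21 = a21, a'34 = a34, a'31 = a31), satisfying a'24·a'21 = a'21·a'24, a'34·a'31 = a'31·a'34, and a'24·a'31 − a'31·a'24 + a'34·a'21 − a'21·a'34 = 0. Define d = a'31⁻¹·(a'24 − a'31⁻¹·a'34·a'21) + a'31⁻¹·a'34·a'31⁻¹·a'21 and d'' = (a'31 − a'24⁻¹·a'21·a'34)·a'24⁻¹ + a'24⁻¹·a'34·a'24⁻¹·a'21. Then d·d'' = 1 and d''·d = 1. -/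
/-!
Both expressions collapse to monomials: `d = a31⁻¹ a24` because `a31⁻¹` commutes with `a34`,
and `d'' = a24⁻¹ a31` because `a24⁻¹` commutes with `a21` and the relation `h3` rewrites the
commutator `[a34, a21]` as `[a31, a24]`. These monomials are visibly inverse to each other.
-/

section

variable {R : Type*} [Ring R]

lemma mul_sub_mul_add_mul_eq_of_commute {b c x y : R} (hxb : Commute x b) :
    b * (c - b * x * y) + b * x * b * y = b * c := by
  rw [mul_assoc b x b, hxb.eq]
  noncomm_ring

lemma sub_mul_add_mul_eq_of_commutator_eq {u v c x y : R} (huv : u * v = 1) (hvu : v * u = 1)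
    (hvy : Commute v y) (hxy : x * y - y * x = c * u - u * c) :
    (c - v * y * x) * v + v * x * v * y = v * c := by
  have hxvy : v * x * v * y = v * x * y * v := by rw [mul_assoc _ v y, hvy.eq, ← mul_assoc]
  calc (c - v * y * x) * v + v * x * v * y
      = c * v + v * (x * y - y * x) * v := by rw [hxvy]; noncomm_ring
    _ = c * v + v * c * (u * v) - v * u * (c * v) := by rw [hxy]; noncomm_ring
    _ = v * c := by rw [huv, hvu]; noncomm_ring

end

/-- Lemma 4.3(1) of the paper: in the chart λ₂ variables (with b31 = a31⁻¹ and
b24 = a24⁻¹ two-sided inverses), the elements d and d'' are mutually inverse. -/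
theorem ncg24_d_d''_inverse {R : Type*} [Ring R] (a24 a21 a34 a31 b31 b24 : R)
    (h31a : a31 * b31 = 1) (h31b : b31 * a31 = 1)
    (h24a : a24 * b24 = 1) (h24b : b24 * a24 = 1)
    (h1 : a24 * a21 = a21 * a24) (h2 : a34 * a31 = a31 * a34)
    (h3 : a24 * a31 - a31 * a24 + a34 * a21 - a21 * a34 = 0) :
    (b31 * (a24 - b31 * a34 * a21) + b31 * a34 * b31 * a21) *
      ((a31 - b24 * a21 * a34) * b24 + b24 * a34 * b24 * a21) = 1 ∧
    ((a31 - b24 * a21 * a34) * b24 + b24 * a34 * b24 * a21) *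
      (b31 * (a24 - b31 * a34 * a21) + b31 * a34 * b31 * a21) = 1 := by
  have hb31 : Commute b31 a34 :=
    Commute.units_inv_left (u := ⟨a31, b31, h31a, h31b⟩) h2.symm
  have hb24 : Commute b24 a21 :=
    Commute.units_inv_left (u := ⟨a24, b24, h24a, h24b⟩) h1
  have hcomm : a34 * a21 - a21 * a34 = a31 * a24 - a24 * a31 := by
    rw [← sub_eq_zero, ← h3]; abel
  rw [mul_sub_mul_add_mul_eq_of_commute hb31.symm,
    sub_mul_add_mul_eq_of_commutator_eq h24a h24b hb24 hcomm]
  constructor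
  · rw [mul_assoc, ← mul_assoc a24, h24a, one_mul, h31b]
  · rw [mul_assoc, ← mul_assoc a31, h31a, one_mul, h24b]
end

section
/- Let R be an associative unital ring containing elements a13, a14, a23, a24 with a13 and d := a13·a24 − a14·a23 invertible, satisfying a13·a14 = a14·a13, a23·a24 = a24·a23, and a13·a24 − a24·a13 + a23·a14 − a14·a23 = 0. Assume also that a24 − a13⁻¹·a14·a23 is invertible with inverse equal to d⁻¹·a13. Then a13⁻¹ + (a24 − a13⁻¹·a14·a23)⁻¹·a13⁻¹·a23·a13⁻¹·a14 = d⁻¹·a24. -/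
/-! By the relation `h3`, `d = a13·a24 − a14·a23` also equals `a24·a13 − a23·a14`. Since `a14`
commutes with `a13`, hence with `a13⁻¹`, right multiplication by `a13⁻¹` gives
`d·a13⁻¹ = a24 − a23·a13⁻¹·a14`; multiplying on the left by `d⁻¹` yields the formula. -/

theorem mul_sub_mul_mul_eq_sub_mul_mul {R : Type*} [Ring R] {a b c d u : R}
    (hu : a * u = 1) (hub : Commute u b) (h : a * d - d * a + c * b - b * c = 0) :
    (a * d - b * c) * u = d - c * u * b := by
  have hdet : a * d - b * c = d * a - c * b := by
    linear_combination (norm := noncomm_ring) h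
  calc (a * d - b * c) * u = d * (a * u) - c * (b * u) := by
        rw [hdet]; noncomm_ring
    _ = d - c * u * b := by rw [hu, mul_one, ← hub.eq, mul_assoc]

theorem ncg24_a''31_formula_general {R : Type*} [Ring R] (a13 a14 a23 a24 b e : R)
    (hb1 : a13 * b = 1) (hb2 : b * a13 = 1)
    (he2 : e * (a13 * a24 - a14 * a23) = 1)
    (h1 : a13 * a14 = a14 * a13)
    (h3 : a13 * a24 - a24 * a13 + a23 * a14 - a14 * a23 = 0) :
    b + (e * a13) * b * a23 * b * a14 = e * a24 := by
  have hb14 : Commute b a14 := Commute.units_inv_left (u := ⟨a13, b, hb1, hb2⟩) h1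
  have hdb := mul_sub_mul_mul_eq_sub_mul_mul hb1 hb14 h3
  calc b + (e * a13) * b * a23 * b * a14 = b + e * (a23 * b * a14) := by
        rw [mul_assoc e a13 b, hb1, mul_one]; simp only [mul_assoc]
    _ = e * ((a13 * a24 - a14 * a23) * b) + e * (a23 * b * a14) := by
        rw [← mul_assoc e (a13 * a24 - a14 * a23) b, he2, one_mul]
    _ = e * a24 := by rw [← mul_add, hdb, sub_add_cancel]

/-- Lemma 4.3(2): computation of a''31 = d⁻¹·a24. Here b is a two-sided inverse
of a13, e a two-sided inverse of d = a13·a24 − a14·a23, and the inverse of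
a24 − a13⁻¹·a14·a23 is e·a13. -/
theorem ncg24_a''31_formula {R : Type*} [Ring R] (a13 a14 a23 a24 b e : R)
    (hb1 : a13 * b = 1) (hb2 : b * a13 = 1)
    (he1 : (a13 * a24 - a14 * a23) * e = 1) (he2 : e * (a13 * a24 - a14 * a23) = 1)
    (hs1 : (a24 - b * a14 * a23) * (e * a13) = 1)
    (hs2 : (e * a13) * (a24 - b * a14 * a23) = 1)
    (h1 : a13 * a14 = a14 * a13) (h2 : a23 * a24 = a24 * a23)
    (h3 : a13 * a24 - a24 * a13 + a23 * a14 - a14 * a23 = 0) :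
    b + (e * a13) * b * a23 * b * a14 = e * a24 :=
  ncg24_a''31_formula_general a13 a14 a23 a24 b e hb1 hb2 he2 h1 h3
end

section
/- Let R be an associative unital ring containing elements a13, a14, a23, a24 with a13 invertible and with a24 − a13⁻¹·a14·a23 invertible, satisfying a13·a14 = a14·a13, a23·a24 = a24·a23, and a13·a24 − a24·a13 + a23·a14 − a14·a23 = 0. Then a13·a24 − a14·a23 is invertible, with inverse (a24 − a13⁻¹·a14·a23)⁻¹·a13⁻¹. -/
theorem mul_sub_mul_eq_mul_sub_of_mul_eq_one {R : Type*} [Ring R] {a b : R} (h : a * b = 1)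
    (c d e : R) : a * d - c * e = a * (d - b * c * e) := by
  rw [mul_sub, ← mul_assoc, ← mul_assoc, h, one_mul]

theorem ncg24_det_invertible_general {R : Type*} [Ring R] (a13 a14 a23 a24 b s : R)
    (hb1 : a13 * b = 1) (hb2 : b * a13 = 1)
    (hs1 : (a24 - b * a14 * a23) * s = 1) (hs2 : s * (a24 - b * a14 * a23) = 1) :
    (a13 * a24 - a14 * a23) * (s * b) = 1 ∧
    (s * b) * (a13 * a24 - a14 * a23) = 1 := by
  let u : Rˣ := ⟨a13, b, hb1, hb2⟩ * ⟨a24 - b * a14 * a23, s, hs1, hs2⟩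
  rw [mul_sub_mul_eq_mul_sub_of_mul_eq_one hb1]
  exact ⟨u.mul_inv, u.inv_mul⟩

/-- The noncommutative determinant d = a13·a24 − a14·a23 is invertible once a13
and the Schur-type complement a24 − a13⁻¹·a14·a23 are, with inverse
(a24 − a13⁻¹·a14·a23)⁻¹·a13⁻¹. -/
theorem ncg24_det_invertible {R : Type*} [Ring R] (a13 a14 a23 a24 b s : R)
    (hb1 : a13 * b = 1) (hb2 : b * a13 = 1)
    (hs1 : (a24 - b * a14 * a23) * s = 1) (hs2 : s * (a24 - b * a14 * a23) = 1)
    (h1 : a13 * a14 = a14 * a13) (h2 : a23 * a24 = a24 * a23)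
    (h3 : a13 * a24 - a24 * a13 + a23 * a14 - a14 * a23 = 0) :
    (a13 * a24 - a14 * a23) * (s * b) = 1 ∧
    (s * b) * (a13 * a24 - a14 * a23) = 1 :=
  ncg24_det_invertible_general a13 a14 a23 a24 b s hb1 hb2 hs1 hs2
end

section
/- Let R be an associative unital ring with elements a13, a14, a23, a24 satisfying a13·a14 = a14·a13, a23·a24 = a24·a23, and a13·a24 − a24·a13 + a23·a14 − a14·a23 = 0, with a13 and a23 both invertible. Define a'''14 = a14 − a23⁻¹·a24·a13, a'''12 = −a23⁻¹·a13, a'''34 = a23⁻¹·a24, a'''32 = a23⁻¹. Then a'''12·a'''14 = a'''14·a'''12, a'''32·a'''34 = a'''34·a'''32, and a'''12·a'''34 − a'''14·a'''32 + a'''32·a'''14 − a'''34·a'''12 = 0. -/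
/-!
With `c = a23⁻¹`, conjugating the commutator `[a23, a14]` by `c` gives `[c, a14]`, so the third
relation of the chart `{1,2}` expresses `c * a14 - a14 * c` as `c * (a13 * a24 - a24 * a13) * c`.
Together with `a13 * a14 = a14 * a13` and the fact that `c` commutes with `a24` (as `a23` does),
each new relation is a two-sided linear combination of these three identities.
-/

theorem mul_sub_mul_eq_mul_sub_mul_mul_of_inverse {R : Type*} [Ring R] {a b : R}
    (hab : a * b = 1) (hba : b * a = 1) (x : R) :
    b * x - x * b = b * (x * a - a * x) * b := by
  calc b * x - x * b = b * x * (a * b) - (b * a) * x * b := by rw [hab, hba, mul_one, one_mul]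
    _ = b * (x * a - a * x) * b := by noncomm_ring

theorem ncg24_chart4_relations_general {R : Type*} [Ring R] (a13 a14 a23 a24 b23 : R)
    (h23a : a23 * b23 = 1) (h23b : b23 * a23 = 1)
    (h1 : a13 * a14 = a14 * a13) (h2 : a23 * a24 = a24 * a23)
    (h3 : a13 * a24 - a24 * a13 + a23 * a14 - a14 * a23 = 0) :
    (-(b23 * a13)) * (a14 - b23 * a24 * a13) = (a14 - b23 * a24 * a13) * (-(b23 * a13)) ∧
    b23 * (b23 * a24) = (b23 * a24) * b23 ∧
    (-(b23 * a13)) * (b23 * a24) - (a14 - b23 * a24 * a13) * b23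
      + b23 * (a14 - b23 * a24 * a13) - (b23 * a24) * (-(b23 * a13)) = 0 := by
  have hc : b23 * a24 = a24 * b23 :=
    (Commute.units_inv_left (u := ⟨a23, b23, h23a, h23b⟩) h2).eq
  have hq : b23 * a14 - a14 * b23 = b23 * (a13 * a24 - a24 * a13) * b23 := by
    rw [mul_sub_mul_eq_mul_sub_mul_mul_of_inverse h23a h23b]
    congr 2
    linear_combination (norm := abel) -h3
  refine ⟨?_, ?_, ?_⟩
  · linear_combination (norm := noncomm_ring) -b23 * h1 - hq * a13 + b23 * a13 * hc * a13
  · linear_combination (norm := noncomm_ring) b23 * hc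
  · linear_combination (norm := noncomm_ring) hq - b23 * a13 * hc - b23 * hc * a13

/-- The relations I''' of the chart λ₄ = {1,3} of NCG(2,4) follow from those of
λ₁ = {1,2}; here b13, b23 are two-sided inverses of a13, a23, and
a'''14 = a14 − b23·a24·a13, a'''12 = −b23·a13, a'''34 = b23·a24, a'''32 = b23. -/
theorem ncg24_chart4_relations {R : Type*} [Ring R] (a13 a14 a23 a24 b13 b23 : R)
    (h13a : a13 * b13 = 1) (h13b : b13 * a13 = 1)
    (h23a : a23 * b23 = 1) (h23b : b23 * a23 = 1)
    (h1 : a13 * a14 = a14 * a13) (h2 : a23 * a24 = a24 * a23)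
    (h3 : a13 * a24 - a24 * a13 + a23 * a14 - a14 * a23 = 0) :
    (-(b23 * a13)) * (a14 - b23 * a24 * a13) = (a14 - b23 * a24 * a13) * (-(b23 * a13)) ∧
    b23 * (b23 * a24) = (b23 * a24) * b23 ∧
    (-(b23 * a13)) * (b23 * a24) - (a14 - b23 * a24 * a13) * b23
      + b23 * (a14 - b23 * a24 * a13) - (b23 * a24) * (-(b23 * a13)) = 0 :=
  ncg24_chart4_relations_general a13 a14 a23 a24 b23 h23a h23b h1 h2 h3
end

section
/- Let R be an associative unital ring with elements a24, a21, a34, a31 satisfying a24·a21 = a21·a24, a34·a31 = a31·a34, and a24·a31 − a31·a24 + a34·a21 − a21·a34 = 0, with a24 invertible. Define a''31 = a31 − a24⁻¹·a21·a34, a''32 = −a24⁻¹·a34, a''41 = a24⁻¹·a21, a''42 = a24⁻¹. Then a''31·a''32 = a''32·a''31, a''41·a''42 = a''42·a''41, and a''31·a''42 − a''42·a''31 + a''41·a''32 − a''32·a''41 = 0. -/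
/-!
Conjugating by `b24 = a24⁻¹` turns `[a24, a21] = 0` into `[b24, a21] = 0`, and the third relation
into `a31 b24 - b24 a31 = b24 [a21, a34] b24`. Together with `[a34, a31] = 0`, each relation of the
new chart is then a two-sided linear combination of these identities.
-/

theorem Units.inv_mul_commutator_mul_inv {R : Type*} [Ring R] (u : Rˣ) (x : R) :
    (↑u⁻¹ : R) * (u * x - x * u) * ↑u⁻¹ = x * ↑u⁻¹ - ↑u⁻¹ * x := by
  simp only [mul_sub, sub_mul, ← mul_assoc, Units.inv_mul, one_mul]
  simp only [mul_assoc, Units.mul_inv, mul_one]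

/-- The relations I'' of the chart λ₃ = {3,4} of NCG(2,4) follow from the
relations I' of λ₂ = {2,3}; here b24 is a two-sided inverse of a24 and
a''31 = a31 − b24·a21·a34, a''32 = −b24·a34, a''41 = b24·a21, a''42 = b24. -/
theorem ncg24_chart3_relations {R : Type*} [Ring R] (a24 a21 a34 a31 b24 : R)
    (h24a : a24 * b24 = 1) (h24b : b24 * a24 = 1)
    (h1 : a24 * a21 = a21 * a24) (h2 : a34 * a31 = a31 * a34)
    (h3 : a24 * a31 - a31 * a24 + a34 * a21 - a21 * a34 = 0) :
    (a31 - b24 * a21 * a34) * (-(b24 * a34)) = (-(b24 * a34)) * (a31 - b24 * a21 * a34) ∧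
    (b24 * a21) * b24 = b24 * (b24 * a21) ∧
    (a31 - b24 * a21 * a34) * b24 - b24 * (a31 - b24 * a21 * a34)
      + (b24 * a21) * (-(b24 * a34)) - (-(b24 * a34)) * (b24 * a21) = 0 := by
  let u : Rˣ := ⟨a24, b24, h24a, h24b⟩
  have hb : Commute b24 a21 := Commute.units_inv_left (u := u) h1
  have hconj : a31 * b24 - b24 * a31 = b24 * (a21 * a34 - a34 * a21) * b24 := by
    have hcomm : a24 * a31 - a31 * a24 = a21 * a34 - a34 * a21 := by
      linear_combination (norm := noncomm_ring) h3
    exact (u.inv_mul_commutator_mul_inv a31).symm.trans (congrArg (b24 * · * b24) hcomm)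
  refine ⟨?_, ((Commute.refl b24).mul_right hb).eq.symm, ?_⟩
  · linear_combination (norm := noncomm_ring) b24 * h2 - hconj * a34 - b24 * a34 * hb.eq * a34
  · linear_combination (norm := noncomm_ring) hconj + b24 * hb.eq * a34 + b24 * a34 * hb.eq
end
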